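/- For every positive integer n, zeta(2n) = (-1)^(n+1) * pi^(2n) / (2 * (2^(2n) - 1)) * sum over k from 0 to n-1 of E_{2k} / ((2k)! * (2(n-k)-1)!), where zeta is the Riemann zeta function and E_{2k} are the Euler numbers. -/

import Mathlib

/-!
The Taylor coefficients of `1 / cosh` are `E_k / k!`, so the sum is the coefficient of
`t^(2n-1)` in `sinh t / cosh t = tanh t`. Writing `B(x) = x / (e^x - 1)` for the generating
function of the Bernoulli numbers, `x tanh x = B(4x) - B(2x) + x`, so that coefficient is
`2^(2n) (2^(2n) - 1) B_(2n) / (2n)!`, and Euler's formula for `ζ(2n)` finishes the proof.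
-/

/-- The Euler numbers, defined via the generating function `1 / cosh t = ∑ Eₙ tⁿ / n!`,
i.e. as derivatives of `1 / cosh` at `0`. -/
noncomputable def eulerNumber (n : ℕ) : ℝ :=
  iteratedDeriv n (fun t : ℝ => 1 / Real.cosh t) 0

open Finset PowerSeries Nat
open scoped ContDiff

theorem Finset.sum_range_two_mul {M : Type*} [AddCommMonoid M] (f : ℕ → M) (n : ℕ) :
    ∑ i ∈ range (2 * n), f i = ∑ k ∈ range n, (f (2 * k) + f (2 * k + 1)) := by
  induction n with
  | zero => simp
  | succ n ih => rw [mul_add_one, sum_range_succ, sum_range_succ, sum_range_succ, ih, add_assoc]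

section HyperbolicSeries

variable (K : Type*) [Field K]

noncomputable def coshSeries : K⟦X⟧ := PowerSeries.mk fun n => if Even n then (n ! : K)⁻¹ else 0

noncomputable def sinhSeries : K⟦X⟧ := PowerSeries.mk fun n => if Even n then 0 else (n ! : K)⁻¹

variable {K}

theorem constantCoeff_coshSeries : constantCoeff (coshSeries K) = 1 := by
  simp [coshSeries, ← coeff_zero_eq_constantCoeff_apply]

theorem coeff_sinhSeries_of_even {n : ℕ} (h : Even n) : coeff n (sinhSeries K) = 0 := by
  simp [sinhSeries, h]

theorem coeff_sinhSeries_of_odd {n : ℕ} (h : Odd n) : coeff n (sinhSeries K) = (n ! : K)⁻¹ := by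
  simp [sinhSeries, Nat.not_even_iff_odd.mpr h]

theorem coeff_two_mul_sub_one_mul_sinhSeries (p : K⟦X⟧) (n : ℕ) :
    coeff (2 * n - 1) (p * sinhSeries K) =
      ∑ k ∈ range n, coeff (2 * k) p / (2 * (n - k) - 1)! := by
  cases n with
  | zero => simp [sinhSeries]
  | succ m =>
    rw [coeff_mul, Nat.sum_antidiagonal_eq_sum_range_succ (fun i j => coeff i p * coeff j _),
      show (2 * (m + 1) - 1).succ = 2 * (m + 1) by omega, sum_range_two_mul]
    refine sum_congr rfl fun k hk => ?_
    have hk := mem_range.mp hk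
    rw [coeff_sinhSeries_of_odd (n := 2 * (m + 1) - 1 - 2 * k) ⟨m - k, by omega⟩,
      coeff_sinhSeries_of_even (n := 2 * (m + 1) - 1 - (2 * k + 1)) ⟨m - k, by omega⟩,
      show 2 * (m + 1) - 1 - 2 * k = 2 * (m + 1 - k) - 1 by omega, mul_zero, add_zero,
      div_eq_mul_inv]

variable (K) [CharZero K]

theorem coshSeries_add_sinhSeries : coshSeries K + sinhSeries K = exp K := by
  ext n
  by_cases h : Even n <;> simp [coshSeries, sinhSeries, coeff_exp, h]

theorem coshSeries_sub_sinhSeries : coshSeries K - sinhSeries K = evalNegHom (exp K) := by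
  ext n
  rcases Nat.even_or_odd n with h | h
  · simp [coshSeries, sinhSeries, coeff_exp, evalNegHom, coeff_rescale, h, h.neg_one_pow]
  · simp [coshSeries, sinhSeries, coeff_exp, evalNegHom, coeff_rescale, Nat.not_even_iff_odd.mpr h,
      h.neg_one_pow]

theorem coshSeries_sq_sub_sinhSeries_sq : coshSeries K ^ 2 - sinhSeries K ^ 2 = 1 := by
  have h : (coshSeries K + sinhSeries K) * (coshSeries K - sinhSeries K) = 1 := by
    rw [coshSeries_add_sinhSeries, coshSeries_sub_sinhSeries]
    exact exp_mul_exp_neg_eq_one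
  linear_combination h

theorem rescale_bernoulliPowerSeries_mul_exp_pow_sub_one (k : ℕ) :
    rescale (k : K) (bernoulliPowerSeries K) * (exp K ^ k - 1) = (k : K⟦X⟧) * X := by
  simpa [rescale_X, exp_pow_eq_rescale_exp] using
    congrArg (rescale (k : K)) (bernoulliPowerSeries_mul_exp_sub_one K)

/- Clear the denominators of `B(4x) = 4x / (e^{4x} - 1)` and `B(2x) = 2x / (e^{2x} - 1)`, then
use `e^x = cosh x + sinh x` and `cosh² x - sinh² x = 1`. -/
theorem X_mul_sinhSeries :
    X * sinhSeries K =
      (rescale 4 (bernoulliPowerSeries K) - rescale 2 (bernoulliPowerSeries K) + X) *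
        coshSeries K := by
  have hB2 := rescale_bernoulliPowerSeries_mul_exp_pow_sub_one K 2
  have hB4 := rescale_bernoulliPowerSeries_mul_exp_pow_sub_one K 4
  rw [← coshSeries_add_sinhSeries] at hB2 hB4
  push_cast at hB2 hB4
  set c := coshSeries K
  set s := sinhSeries K
  have h4X : (4 : K⟦X⟧) * X ≠ 0 := fun h => by simpa [← map_ofNat C] using congrArg (coeff 1) h
  have hne : (c + s) ^ 4 - 1 ≠ 0 := right_ne_zero_of_mul (hB4 ▸ h4X)
  apply mul_left_cancel₀ hne
  linear_combination ((c + s) ^ 2 + 1) * c * hB2 - c * hB4 -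
    X * ((c + s) ^ 2 - 1) * (c + s) * coshSeries_sq_sub_sinhSeries_sq K

noncomputable def tanhSeries : K⟦X⟧ := (coshSeries K)⁻¹ * sinhSeries K

theorem X_mul_tanhSeries :
    X * tanhSeries K =
      rescale 4 (bernoulliPowerSeries K) - rescale 2 (bernoulliPowerSeries K) + X := by
  rw [tanhSeries, mul_left_comm, X_mul_sinhSeries, mul_comm _ (coshSeries K), ← mul_assoc,
    PowerSeries.inv_mul_cancel _ (by simp [constantCoeff_coshSeries]), one_mul]

theorem coeff_tanhSeries {n : ℕ} (hn : 0 < n) :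
    coeff (2 * n - 1) (tanhSeries K) =
      2 ^ (2 * n) * (2 ^ (2 * n) - 1) * bernoulli (2 * n) / (2 * n)! := by
  have h := congrArg (coeff (2 * n - 1 + 1)) (X_mul_tanhSeries K)
  rw [coeff_succ_X_mul, Nat.sub_add_cancel (by omega)] at h
  have h4 : (4 : K) ^ (2 * n) = 2 ^ (2 * n) * 2 ^ (2 * n) := by rw [← mul_pow]; norm_num
  simp only [h, map_add, map_sub, coeff_rescale, bernoulliPowerSeries, coeff_mk, coeff_X,
    if_neg (show 2 * n ≠ 1 by omega), h4, map_div₀, eq_ratCast, Rat.cast_natCast]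
  ring

end HyperbolicSeries

section Taylor

variable {𝕜 : Type*} [NontriviallyNormedField 𝕜]

noncomputable def taylorSeriesAtZero (f : 𝕜 → 𝕜) : 𝕜⟦X⟧ :=
  PowerSeries.mk fun n => iteratedDeriv n f 0 / n !

theorem coeff_taylorSeriesAtZero (f : 𝕜 → 𝕜) (n : ℕ) :
    coeff n (taylorSeriesAtZero f) = iteratedDeriv n f 0 / n ! :=
  coeff_mk _ _

theorem taylorSeriesAtZero_const (c : 𝕜) : taylorSeriesAtZero (fun _ => c) = C c := by
  ext n
  rw [coeff_taylorSeriesAtZero, iteratedDeriv_const, coeff_C]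
  split_ifs with h <;> simp [h]

variable [CharZero 𝕜]

theorem taylorSeriesAtZero_mul {f g : 𝕜 → 𝕜} (hf : ContDiffAt 𝕜 ∞ f 0)
    (hg : ContDiffAt 𝕜 ∞ g 0) :
    taylorSeriesAtZero (f * g) = taylorSeriesAtZero f * taylorSeriesAtZero g := by
  ext n
  rw [coeff_mul, Nat.sum_antidiagonal_eq_sum_range_succ_mk, coeff_taylorSeriesAtZero,
    iteratedDeriv_mul (hf.of_le (by exact_mod_cast le_top)) (hg.of_le (by exact_mod_cast le_top)),
    sum_div]
  refine sum_congr rfl fun i hi => ?_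
  rw [coeff_taylorSeriesAtZero, coeff_taylorSeriesAtZero,
    Nat.cast_choose 𝕜 (Nat.le_of_lt_succ (mem_range.mp hi))]
  have := (Nat.cast_ne_zero (R := 𝕜)).mpr n.factorial_ne_zero
  field_simp

theorem taylorSeriesAtZero_inv {g : 𝕜 → 𝕜} (hg : ContDiffAt 𝕜 ∞ g 0) (hg0 : g 0 ≠ 0) :
    taylorSeriesAtZero g⁻¹ = (taylorSeriesAtZero g)⁻¹ := by
  have hinv : g⁻¹ * g =ᶠ[nhds 0] fun _ => 1 :=
    (hg.continuousAt.eventually_ne hg0).mono fun x hx => inv_mul_cancel₀ hx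
  have hprod : taylorSeriesAtZero (g⁻¹ * g) = 1 := by
    rw [← map_one C, ← taylorSeriesAtZero_const]
    ext n
    rw [coeff_taylorSeriesAtZero, coeff_taylorSeriesAtZero, hinv.iteratedDeriv_eq]
  rw [PowerSeries.eq_inv_iff_mul_eq_one, ← taylorSeriesAtZero_mul (hg.inv hg0) hg, hprod]
  rwa [← coeff_zero_eq_constantCoeff_apply, coeff_taylorSeriesAtZero, iteratedDeriv_zero,
    factorial_zero, cast_one, div_one]

end Taylor

theorem taylorSeriesAtZero_cosh : taylorSeriesAtZero Real.cosh = coshSeries ℝ := by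
  ext n
  rw [coeff_taylorSeriesAtZero, coshSeries, coeff_mk]
  obtain ⟨k, rfl | rfl⟩ := Nat.even_or_odd' n <;> simp

theorem coeff_inv_coshSeries (n : ℕ) : coeff n (coshSeries ℝ)⁻¹ = eulerNumber n / n ! := by
  rw [← taylorSeriesAtZero_cosh, ← taylorSeriesAtZero_inv Real.contDiff_cosh.contDiffAt (by simp),
    coeff_taylorSeriesAtZero, eulerNumber]
  simp only [one_div]
  rfl

theorem sum_eulerNumber_div_factorial_mul_factorial {n : ℕ} (hn : 0 < n) :
    ∑ k ∈ range n, eulerNumber (2 * k) / ((2 * k)! * (2 * (n - k) - 1)!) =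
      2 ^ (2 * n) * (2 ^ (2 * n) - 1) * bernoulli (2 * n) / (2 * n)! := by
  rw [← coeff_tanhSeries ℝ hn, tanhSeries, coeff_two_mul_sub_one_mul_sinhSeries]
  simp only [coeff_inv_coshSeries, div_div]

theorem zeta_even_eq_sum_euler (n : ℕ) (hn : 0 < n) :
    riemannZeta (2 * n) =
      (-1) ^ (n + 1) * (Real.pi : ℂ) ^ (2 * n) / (2 * ((2 : ℂ) ^ (2 * n) - 1)) *
        ∑ k ∈ Finset.range n,
          (eulerNumber (2 * k) : ℂ) /
            ((Nat.factorial (2 * k)) * (Nat.factorial (2 * (n - k) - 1))) := by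
  have hsum := congrArg ((↑) : ℝ → ℂ) (sum_eulerNumber_div_factorial_mul_factorial hn)
  push_cast at hsum
  have hpow : (2 : ℂ) ^ (2 * n) = 2 * 2 ^ (2 * n - 1) := by
    rw [← pow_succ' (2 : ℂ), Nat.sub_add_cancel (by omega)]
  have hne : (2 : ℂ) ^ (2 * n) - 1 ≠ 0 :=
    sub_ne_zero.mpr (by exact_mod_cast (Nat.one_lt_two_pow (by omega)).ne')
  rw [riemannZeta_two_mul_nat hn.ne', hsum]
  field_simp
  rw [hpow]
  ring
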